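/- arXiv:1909.03505 — 2 statements merged into one kernel-verified Lean document; each statement's English description precedes it below -/
import Mathlib

section
/- Assume ν ≪ μ. Let γ := μ + ν, and let (π_n)_{n∈ℕ} be an increasing sequence of finite measurable partitions of Ω (π_{n+1} refines π_n) chosen so that sup_n ∫_Ω e^{−f_{π_n}(γ)} dγ = sup_π ∫_Ω e^{−f_π(γ)} dγ, the supremum on the right being over all finite measurable partitions π. Then f_{π_n}(μ) converges to dν/dμ in L¹(μ) as n → ∞. -/
open MeasureTheory Filter Set
open scoped ENNReal Topology Classical

/-- A finite measurable partition of `Ω`: a finite collection of pairwise disjoint measurable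
sets whose union is `Ω`. -/
def IsFinitePartition {Ω : Type*} [MeasurableSpace Ω] (π : Finset (Set Ω)) : Prop :=
  (∀ A ∈ π, MeasurableSet A) ∧
    (π : Set (Set Ω)).PairwiseDisjoint id ∧
    ⋃₀ (π : Set (Set Ω)) = Set.univ

/-- `π'` refines `π` if every element of `π` is a union of elements of `π'`. -/
def Refines {Ω : Type*} (π' π : Finset (Set Ω)) : Prop :=
  ∀ A ∈ π, ∃ S ⊆ π', A = ⋃₀ (S : Set (Set Ω))

/-- `f_π(λ) := Σ_{A ∈ π, λ(A) > 0} 1_A ⬝ ν(A)/λ(A)`. -/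
noncomputable def partFn {Ω : Type*} [MeasurableSpace Ω] (ν lam : Measure Ω)
    (π : Finset (Set Ω)) (x : Ω) : ℝ :=
  ∑ A ∈ π, if lam A ≠ 0 ∧ x ∈ A then (ν A).toReal / (lam A).toReal else 0

/-!
Write `γ = μ + ν` and `g = dν/dγ`, so `0 ≤ g ≤ 1`. On each atom `f_π(γ)` is the `γ`-average of
`g`, hence `∫ e^{-f_π(γ)} (h - f_π(γ)) dγ = 0` for every `h` with the same atom integrals as `g`.
Expanding `t ↦ e^{-t}` around `f_π(γ)` and using its strong convexity on `[0, 1]` gives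
`∫ e^{-f_π(γ)} dγ + c ∫ (g - f_π(γ))² dγ ≤ ∫ e^{-g} dγ`, while plain convexity shows that
`π ↦ ∫ e^{-f_π(γ)} dγ` increases under refinement. Partitions into thin level sets of `g` bring
it arbitrarily close to `∫ e^{-g} dγ`, so along the increasing maximizing sequence `π_n` it
converges to `∫ e^{-g} dγ` and `f_{π_n}(γ) → g` in `L²(γ)`, hence in `γ`-measure.

Finally `f_π(μ) = f_π(γ) / (1 - f_π(γ))` and `dν/dμ = g / (1 - g)` with `g < 1` `μ`-a.e., so
every subsequence has a further subsequence along which `f_{π_n}(μ) → dν/dμ` `μ`-a.e. Both sides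
have `μ`-integral `ν(Ω)`, and Scheffé's lemma upgrades this to convergence in `L¹(μ)`.
-/

namespace IsFinitePartition

variable {Ω : Type*} [MeasurableSpace Ω] {π : Finset (Set Ω)}

lemma biUnion_eq_univ (hπ : IsFinitePartition π) : ⋃ A ∈ π, A = univ := by
  simpa [sUnion_eq_biUnion] using hπ.2.2

lemma exists_mem (hπ : IsFinitePartition π) (x : Ω) : ∃ A ∈ π, x ∈ A := by
  simpa using hπ.biUnion_eq_univ.ge (mem_univ x)

lemma setIntegral_sUnion (hπ : IsFinitePartition π) {S : Finset (Set Ω)} (hS : S ⊆ π)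
    {μ : Measure Ω} {f : Ω → ℝ} (hf : Integrable f μ) :
    ∫ x in ⋃₀ (S : Set (Set Ω)), f x ∂μ = ∑ A ∈ S, ∫ x in A, f x ∂μ := by
  rw [sUnion_eq_biUnion]
  exact integral_biUnion_finset S (fun A hA => hπ.1 A (hS hA))
    (hπ.2.1.subset (by simpa using hS)) fun A _ => hf.integrableOn

lemma integral_eq_sum (hπ : IsFinitePartition π) {μ : Measure Ω} {f : Ω → ℝ}
    (hf : Integrable f μ) : ∫ x, f x ∂μ = ∑ A ∈ π, ∫ x in A, f x ∂μ := by
  rw [← hπ.setIntegral_sUnion subset_rfl hf, hπ.2.2, setIntegral_univ]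

end IsFinitePartition

lemma isFinitePartition_image_fiber {Ω ι : Type*} [MeasurableSpace Ω] (q : Ω → ι)
    (s : Finset ι) (hq : ∀ x, q x ∈ s) (hmeas : ∀ i, MeasurableSet (q ⁻¹' {i})) :
    IsFinitePartition (s.image fun i => q ⁻¹' {i}) := by
  refine ⟨?_, ?_, ?_⟩
  · simp only [Finset.mem_image]
    rintro _ ⟨i, -, rfl⟩
    exact hmeas i
  · simp only [Finset.coe_image]
    rintro _ ⟨i, -, rfl⟩ _ ⟨j, -, rfl⟩ hij
    exact Disjoint.preimage q (disjoint_singleton.2 fun h => hij (h ▸ rfl))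
  · refine eq_univ_of_forall fun x => mem_sUnion.2 ⟨q ⁻¹' {q x}, ?_, rfl⟩
    simpa using ⟨q x, hq x, rfl⟩

lemma ae_forall_mem_measure_ne_zero {Ω : Type*} [MeasurableSpace Ω] (S : Finset (Set Ω))
    (μ : Measure Ω) :
    ∀ᵐ x ∂μ, ∀ A ∈ S, x ∈ A → μ A ≠ 0 := by
  have : ∀ᵐ x ∂μ, ∀ A ∈ (S : Set (Set Ω)), x ∈ A → μ A ≠ 0 := by
    refine (ae_ball_iff S.countable_toSet).2 fun A _ => ?_
    by_cases hA : μ A = 0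
    · filter_upwards [measure_eq_zero_iff_ae_notMem.1 hA] with x hx using fun h _ => hx h
    · exact ae_of_all _ fun _ _ => hA
  simpa using this

-- The fibres of `x ↦ ⌊(N + 1) g x⌋` have oscillation below `1 / (N + 1)`.
lemma exists_isFinitePartition_abs_sub_le {Ω : Type*} [MeasurableSpace Ω] {g : Ω → ℝ}
    (hg : Measurable g) (hg01 : ∀ x, g x ∈ Icc 0 1) {δ : ℝ} (hδ : 0 < δ) :
    ∃ π : Finset (Set Ω), IsFinitePartition π ∧ ∀ A ∈ π, ∀ x ∈ A, ∀ y ∈ A, |g x - g y| ≤ δ := by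
  obtain ⟨N, hN⟩ := exists_nat_one_div_lt hδ
  set q : Ω → ℤ := fun x => ⌊g x * (N + 1)⌋
  refine ⟨_, isFinitePartition_image_fiber q (Finset.Icc 0 (N + 1)) (fun x => ?_)
    fun i => (hg.mul_const _).floor (measurableSet_singleton i), ?_⟩
  · have := hg01 x
    simp only [q, Finset.mem_Icc, Int.floor_nonneg, Int.floor_le_iff]
    constructor
    · exact mul_nonneg this.1 (by positivity)
    · push_cast; nlinarith [this.2]
  · simp only [Finset.mem_image]
    rintro _ ⟨i, -, rfl⟩ x rfl y hy
    have h := Int.abs_sub_lt_one_of_floor_eq_floor hy.symm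
    rw [← sub_mul, abs_mul, abs_of_pos (by positivity : (0 : ℝ) < N + 1),
      ← lt_div_iff₀ (by positivity)] at h
    exact h.le.trans hN.le

lemma integrable_exp_neg_of_nonneg {Ω : Type*} [MeasurableSpace Ω] {μ : Measure Ω}
    [IsFiniteMeasure μ] {f : Ω → ℝ} (hf : Measurable f) (h0 : ∀ x, 0 ≤ f x) :
    Integrable (fun x => Real.exp (-f x)) μ :=
  Integrable.of_bound hf.neg.exp.aestronglyMeasurable 1 <| ae_of_all _ fun x => by
    simpa [abs_of_pos (Real.exp_pos _)] using h0 x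

section partFn

variable {Ω : Type*} [MeasurableSpace Ω] {ν lam : Measure Ω} {π : Finset (Set Ω)}

-- The guard `lam A ≠ 0` in `partFn` is redundant, since `ν.real A / 0 = 0`.
lemma partFn_eq_of_mem (hπ : IsFinitePartition π) {A : Set Ω} (hA : A ∈ π) {x : Ω}
    (hx : x ∈ A) : partFn ν lam π x = ν.real A / lam.real A := by
  rw [partFn, Finset.sum_eq_single_of_mem A hA]
  · by_cases h : lam A = 0 <;> simp [h, hx, measureReal_def]
  · intro B hB hBA
    have hxB : x ∉ B := fun h => Set.disjoint_left.1 (hπ.2.1 hB hA hBA) h hx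
    simp [hxB]

lemma partFn_nonneg (x : Ω) : 0 ≤ partFn ν lam π x :=
  Finset.sum_nonneg fun _ _ => by split_ifs <;> positivity

lemma partFn_le_one [IsFiniteMeasure lam] (hνlam : ν ≤ lam) (hπ : IsFinitePartition π)
    (x : Ω) : partFn ν lam π x ≤ 1 := by
  obtain ⟨A, hA, hx⟩ := hπ.exists_mem x
  rw [partFn_eq_of_mem hπ hA hx]
  exact div_le_one_of_le₀ (ENNReal.toReal_mono (measure_ne_top lam A) (hνlam A)) measureReal_nonneg

lemma measurable_partFn (hπ : IsFinitePartition π) : Measurable (partFn ν lam π) :=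
  Finset.measurable_sum _ fun A hA =>
    Measurable.ite ((MeasurableSet.const _).inter (hπ.1 A hA)) measurable_const measurable_const

lemma integrable_partFn (hπ : IsFinitePartition π) (κ : Measure Ω) [IsFiniteMeasure κ] :
    Integrable (partFn ν lam π) κ :=
  Integrable.of_bound (measurable_partFn hπ).aestronglyMeasurable
    (∑ A ∈ π, ν.real A / lam.real A) <| ae_of_all _ fun x => by
      rw [Real.norm_of_nonneg (partFn_nonneg x), partFn]
      exact Finset.sum_le_sum fun A _ => by split_ifs <;> simp [measureReal_def, div_nonneg]

lemma setIntegral_partFn [IsFiniteMeasure lam] (hνlam : ν ≪ lam) (hπ : IsFinitePartition π)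
    {A : Set Ω} (hA : A ∈ π) : ∫ x in A, partFn ν lam π x ∂lam = ν.real A := by
  rw [setIntegral_congr_fun (hπ.1 A hA) fun x hx => partFn_eq_of_mem hπ hA hx,
    setIntegral_const, smul_eq_mul, mul_div_cancel_of_imp']
  intro h
  rw [measureReal_eq_zero_iff] at h
  simp [measureReal_def, hνlam h]

lemma setIntegral_sUnion_partFn [IsFiniteMeasure ν] [IsFiniteMeasure lam] (hνlam : ν ≪ lam)
    (hπ : IsFinitePartition π) {S : Finset (Set Ω)} (hS : S ⊆ π) :
    ∫ x in ⋃₀ (S : Set (Set Ω)), partFn ν lam π x ∂lam = ν.real (⋃₀ (S : Set (Set Ω))) := by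
  rw [hπ.setIntegral_sUnion hS (integrable_partFn hπ lam), sUnion_eq_biUnion,
    Finset.set_biUnion_coe, measureReal_biUnion_finset (f := fun A => A)
      (hπ.2.1.subset (by simpa using hS)) fun A hA => hπ.1 A (hS hA)]
  exact Finset.sum_congr rfl fun A hA => setIntegral_partFn hνlam hπ (hS hA)

lemma integral_partFn [IsFiniteMeasure ν] [IsFiniteMeasure lam] (hνlam : ν ≪ lam)
    (hπ : IsFinitePartition π) : ∫ x, partFn ν lam π x ∂lam = ν.real univ := by
  simpa [hπ.2.2] using setIntegral_sUnion_partFn hνlam hπ subset_rfl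

lemma integrable_exp_neg_partFn_mul (hπ : IsFinitePartition π) {v : Ω → ℝ}
    (hv : Integrable v lam) : Integrable (fun x => Real.exp (-partFn ν lam π x) * v x) lam :=
  hv.bdd_mul (measurable_partFn hπ).neg.exp.aestronglyMeasurable (c := 1) <| ae_of_all _ fun x => by
    simpa [abs_of_pos (Real.exp_pos _)] using partFn_nonneg x

end partFn

namespace Real

lemma exp_neg_sub_mul_le (s t : ℝ) : exp (-s) - exp (-s) * (t - s) ≤ exp (-t) := by
  have h : exp (-s) * exp (s - t) = exp (-t) := by rw [← exp_add]; ring_nf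
  nlinarith [add_one_le_exp (s - t), exp_pos (-s)]

lemma sq_div_four_le_exp_neg_sub_one_add {u : ℝ} (hu : |u| ≤ 1) :
    u ^ 2 / 4 ≤ exp (-u) - 1 + u := by
  have h := exp_bound (x := -u) (by rwa [abs_neg]) (n := 3) (by norm_num)
  simp only [Finset.sum_range_succ, Finset.sum_range_zero, abs_neg] at h
  norm_num [Nat.factorial] at h
  have hu3 : |u| ^ 3 ≤ u ^ 2 := by
    rw [← sq_abs u, pow_succ]
    exact mul_le_of_le_one_right (sq_nonneg _) hu
  linarith [(abs_le.1 h).1, sq_nonneg u]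

lemma exp_neg_sub_mul_add_sq_le {s t : ℝ} (hs : s ≤ 1) (hts : |t - s| ≤ 1) :
    exp (-s) - exp (-s) * (t - s) + exp (-1) / 4 * (t - s) ^ 2 ≤ exp (-t) := by
  have h : exp (-s) * exp (-(t - s)) = exp (-t) := by rw [← exp_add]; ring_nf
  have hs' : exp (-1) ≤ exp (-s) := exp_le_exp.2 (by linarith)
  have hq := sq_div_four_le_exp_neg_sub_one_add hts
  nlinarith [mul_le_mul_of_nonneg_right hs' (sq_nonneg (t - s)), exp_pos (-s)]

lemma exp_neg_sub_abs_le {b : ℝ} (hb : 0 ≤ b) (a : ℝ) : exp (-b) - |a - b| ≤ exp (-a) := by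
  have h1 : exp (-b) ≤ 1 := exp_le_one_iff.2 (by linarith)
  have h2 : exp (-b) * (a - b) ≤ |a - b| :=
    (mul_le_mul_of_nonneg_left (le_abs_self _) (exp_pos _).le).trans
      (mul_le_of_le_one_left (abs_nonneg _) h1)
  linarith [exp_neg_sub_mul_le b a]

end Real

lemma tendstoInMeasure_of_tendsto_integral_sq {Ω ι : Type*} [MeasurableSpace Ω] {l : Filter ι}
    {μ : Measure Ω} [IsFiniteMeasure μ] {F : ι → Ω → ℝ} {G : Ω → ℝ}
    (hint : ∀ i, Integrable (fun x => (G x - F i x) ^ 2) μ)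
    (hlim : Tendsto (fun i => ∫ x, (G x - F i x) ^ 2 ∂μ) l (𝓝 0)) :
    TendstoInMeasure μ F l G := by
  refine tendstoInMeasure_iff_measureReal_dist.2 fun ε hε => ?_
  refine squeeze_zero (fun _ => measureReal_nonneg) (fun i => ?_)
    (by simpa using hlim.div_const (ε ^ 2))
  rw [le_div_iff₀ (by positivity), mul_comm]
  refine le_trans ?_
    (mul_meas_ge_le_integral_of_nonneg (ae_of_all _ fun x => sq_nonneg _) (hint i) (ε ^ 2))
  refine mul_le_mul_of_nonneg_left (measureReal_mono fun x hx => ?_) (sq_nonneg ε)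
  rw [mem_ofPred_eq, dist_comm, Real.dist_eq] at hx
  rw [mem_ofPred_eq, ← sq_abs (G x - F i x)]
  exact pow_le_pow_left₀ hε.le hx 2

-- Scheffé's lemma; positivity of the `F n` gives the domination `(R - F n)⁺ ≤ |R|`.
lemma tendsto_integral_abs_sub_of_tendsto_ae {Ω : Type*} [MeasurableSpace Ω] {μ : Measure Ω}
    {F : ℕ → Ω → ℝ} {R : Ω → ℝ}
    (hF : ∀ n, Integrable (F n) μ) (hR : Integrable R μ) (hF0 : ∀ n, 0 ≤ᵐ[μ] F n)
    (hFR : ∀ n, ∫ x, F n x ∂μ = ∫ x, R x ∂μ)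
    (hlim : ∀ᵐ x ∂μ, Tendsto (fun n => F n x) atTop (𝓝 (R x))) :
    Tendsto (fun n => ∫ x, |F n x - R x| ∂μ) atTop (𝓝 0) := by
  have hmax (n : ℕ) : Integrable (fun x => max (R x - F n x) 0) μ :=
    (hR.sub (hF n)).sup (integrable_zero _ _ μ)
  have hpos : Tendsto (fun n => ∫ x, max (R x - F n x) 0 ∂μ) atTop (𝓝 0) := by
    have := tendsto_integral_of_dominated_convergence (F := fun n x => max (R x - F n x) 0)
      (f := fun _ => 0) (fun x => |R x|) (fun n => (hmax n).1) hR.abs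
      (fun n => by
        filter_upwards [hF0 n] with x hx
        rw [Real.norm_of_nonneg (le_max_right _ _)]
        exact max_le (by linarith [le_abs_self (R x), show 0 ≤ F n x from hx]) (abs_nonneg _))
      (by
        filter_upwards [hlim] with x hx
        simpa using ((tendsto_const_nhds (x := R x)).sub hx).max (tendsto_const_nhds (x := 0)))
    simpa using this
  have habs (n : ℕ) : ∫ x, |F n x - R x| ∂μ = 2 * ∫ x, max (R x - F n x) 0 ∂μ := by
    have hpt (x : Ω) : |F n x - R x| = (F n x - R x) + 2 * max (R x - F n x) 0 := by
      rcases le_total (F n x) (R x) with h | h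
      · rw [abs_of_nonpos (by linarith), max_eq_left (by linarith)]; ring
      · rw [abs_of_nonneg (by linarith), max_eq_right (by linarith)]; ring
    simp_rw [hpt]
    rw [integral_add ?_ ((hmax n).const_mul 2), integral_sub (hF n) hR, hFR, sub_self, zero_add,
      integral_const_mul]
    exact (hF n).sub hR
  simpa [habs] using hpos.const_mul 2

section ExpFunctional

variable {Ω : Type*} [MeasurableSpace Ω] {ν lam : Measure Ω} [IsFiniteMeasure lam]
  {π π' : Finset (Set Ω)}

lemma integral_exp_neg_partFn_mul_sub_eq_zero (hπ : IsFinitePartition π) {u : Ω → ℝ}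
    (hu : Integrable u lam) (hu_atoms : ∀ A ∈ π, ∫ x in A, u x ∂lam = ν.real A) :
    ∫ x, Real.exp (-partFn ν lam π x) * (u x - partFn ν lam π x) ∂lam = 0 := by
  have hint : Integrable (fun x => Real.exp (-partFn ν lam π x) * (u x - partFn ν lam π x)) lam :=
    integrable_exp_neg_partFn_mul hπ (hu.sub (integrable_partFn hπ lam))
  rw [hπ.integral_eq_sum hint]
  refine Finset.sum_eq_zero fun A hA => ?_
  rw [setIntegral_congr_fun (hπ.1 A hA) fun x hx => by rw [partFn_eq_of_mem hπ hA hx],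
    integral_const_mul, integral_sub hu.integrableOn (integrableOn_const (measure_ne_top _ _)),
    hu_atoms A hA, setIntegral_const, smul_eq_mul, mul_div_cancel_of_imp', sub_self, mul_zero]
  intro h
  rw [← hu_atoms A hA, Measure.restrict_eq_zero.2 ((measureReal_eq_zero_iff).1 h),
    integral_zero_measure]

lemma toReal_rnDeriv_le_one (hνlam : ν ≤ lam) : ∀ᵐ x ∂lam, (ν.rnDeriv lam x).toReal ≤ 1 := by
  filter_upwards [Measure.rnDeriv_le_one_of_le hνlam] with x hx
  exact ENNReal.toReal_le_of_le_ofReal zero_le_one (by simpa using hx)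

lemma abs_toReal_rnDeriv_sub_partFn_le_one (hνlam : ν ≤ lam) (hπ : IsFinitePartition π) :
    ∀ᵐ x ∂lam, |(ν.rnDeriv lam x).toReal - partFn ν lam π x| ≤ 1 := by
  filter_upwards [toReal_rnDeriv_le_one hνlam] with x hx
  have hf0 := partFn_nonneg (ν := ν) (lam := lam) (π := π) x
  have hf1 := partFn_le_one hνlam hπ x
  have hg0 : 0 ≤ (ν.rnDeriv lam x).toReal := ENNReal.toReal_nonneg
  exact abs_le.2 ⟨by linarith, by linarith⟩

lemma integrable_sq_toReal_rnDeriv_sub_partFn [IsFiniteMeasure ν] (hνlam : ν ≤ lam)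
    (hπ : IsFinitePartition π) :
    Integrable (fun x => ((ν.rnDeriv lam x).toReal - partFn ν lam π x) ^ 2) lam := by
  refine Integrable.of_bound
    ((Measure.integrable_toReal_rnDeriv.sub (integrable_partFn hπ lam)).1.pow 2) 1 ?_
  filter_upwards [abs_toReal_rnDeriv_sub_partFn_le_one hνlam hπ] with x hx
  rwa [Real.norm_of_nonneg (sq_nonneg _), sq_le_one_iff_abs_le_one]

lemma integral_exp_neg_partFn_add_sq_le [IsFiniteMeasure ν] (hνlam : ν ≤ lam)
    (hπ : IsFinitePartition π) :
    ∫ x, Real.exp (-partFn ν lam π x) ∂lam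
        + Real.exp (-1) / 4 * ∫ x, ((ν.rnDeriv lam x).toReal - partFn ν lam π x) ^ 2 ∂lam
      ≤ ∫ x, Real.exp (-(ν.rnDeriv lam x).toReal) ∂lam := by
  set f := partFn ν lam π
  set g := fun x => (ν.rnDeriv lam x).toReal
  have hg : Integrable g lam := Measure.integrable_toReal_rnDeriv
  have hf_exp : Integrable (fun x => Real.exp (-f x)) lam :=
    integrable_exp_neg_of_nonneg (measurable_partFn hπ) partFn_nonneg
  have hcross : Integrable (fun x => Real.exp (-f x) * (g x - f x)) lam :=
    integrable_exp_neg_partFn_mul hπ (hg.sub (integrable_partFn hπ lam))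
  have hsq : Integrable (fun x => (g x - f x) ^ 2) lam :=
    integrable_sq_toReal_rnDeriv_sub_partFn hνlam hπ
  have hzero : ∫ x, Real.exp (-f x) * (g x - f x) ∂lam = 0 :=
    integral_exp_neg_partFn_mul_sub_eq_zero hπ hg fun A _ =>
      Measure.setIntegral_toReal_rnDeriv (Measure.absolutelyContinuous_of_le hνlam) A
  calc ∫ x, Real.exp (-f x) ∂lam + Real.exp (-1) / 4 * ∫ x, (g x - f x) ^ 2 ∂lam
      = ∫ x, (Real.exp (-f x) - Real.exp (-f x) * (g x - f x)
          + Real.exp (-1) / 4 * (g x - f x) ^ 2) ∂lam := by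
        rw [integral_add ?_ (hsq.const_mul _), integral_sub hf_exp hcross, hzero,
          integral_const_mul, sub_zero]
        exact hf_exp.sub hcross
    _ ≤ ∫ x, Real.exp (-g x) ∂lam := by
        refine integral_mono_ae ((hf_exp.sub hcross).add (hsq.const_mul _))
          (integrable_exp_neg_of_nonneg (ν.measurable_rnDeriv lam).ennreal_toReal
            fun _ => ENNReal.toReal_nonneg) ?_
        filter_upwards [abs_toReal_rnDeriv_sub_partFn_le_one hνlam hπ] with x hx
        exact Real.exp_neg_sub_mul_add_sq_le (partFn_le_one hνlam hπ x) hx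

lemma integral_exp_neg_partFn_le [IsFiniteMeasure ν] (hνlam : ν ≤ lam)
    (hπ : IsFinitePartition π) :
    ∫ x, Real.exp (-partFn ν lam π x) ∂lam ≤ ∫ x, Real.exp (-(ν.rnDeriv lam x).toReal) ∂lam := by
  have hsq : 0 ≤ Real.exp (-1) / 4
      * ∫ x, ((ν.rnDeriv lam x).toReal - partFn ν lam π x) ^ 2 ∂lam :=
    mul_nonneg (by positivity) (integral_nonneg fun _ => sq_nonneg _)
  linarith [integral_exp_neg_partFn_add_sq_le hνlam hπ]

lemma integral_exp_neg_partFn_le_of_refines [IsFiniteMeasure ν] (hνlam : ν ≪ lam)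
    (hπ : IsFinitePartition π) (hπ' : IsFinitePartition π') (href : Refines π' π) :
    ∫ x, Real.exp (-partFn ν lam π x) ∂lam ≤ ∫ x, Real.exp (-partFn ν lam π' x) ∂lam := by
  have hf_exp : Integrable (fun x => Real.exp (-partFn ν lam π x)) lam :=
    integrable_exp_neg_of_nonneg (measurable_partFn hπ) partFn_nonneg
  have hcross : Integrable (fun x => Real.exp (-partFn ν lam π x)
      * (partFn ν lam π' x - partFn ν lam π x)) lam :=
    integrable_exp_neg_partFn_mul hπ ((integrable_partFn hπ' lam).sub (integrable_partFn hπ lam))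
  have hzero := integral_exp_neg_partFn_mul_sub_eq_zero hπ (integrable_partFn hπ' lam)
    fun A hA => by
      obtain ⟨S, hS, rfl⟩ := href A hA
      exact setIntegral_sUnion_partFn hνlam hπ' hS
  calc ∫ x, Real.exp (-partFn ν lam π x) ∂lam
      = ∫ x, (Real.exp (-partFn ν lam π x)
          - Real.exp (-partFn ν lam π x) * (partFn ν lam π' x - partFn ν lam π x)) ∂lam := by
        rw [integral_sub hf_exp hcross, hzero, sub_zero]
    _ ≤ ∫ x, Real.exp (-partFn ν lam π' x) ∂lam :=
        integral_mono (hf_exp.sub hcross)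
          (integrable_exp_neg_of_nonneg (measurable_partFn hπ') partFn_nonneg)
          fun x => Real.exp_neg_sub_mul_le _ _

lemma exists_isFinitePartition_ae_abs_partFn_sub_le [IsFiniteMeasure ν] (hνlam : ν ≤ lam)
    {δ : ℝ} (hδ : 0 < δ) :
    ∃ π : Finset (Set Ω), IsFinitePartition π ∧
      ∀ᵐ x ∂lam, |partFn ν lam π x - (ν.rnDeriv lam x).toReal| ≤ δ := by
  set h : Ω → ℝ := fun x => min (ν.rnDeriv lam x).toReal 1
  have hh : h =ᵐ[lam] fun x => (ν.rnDeriv lam x).toReal := by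
    filter_upwards [toReal_rnDeriv_le_one hνlam] with x hx using min_eq_left hx
  obtain ⟨π, hπ, hosc⟩ := exists_isFinitePartition_abs_sub_le
    ((ν.measurable_rnDeriv lam).ennreal_toReal.min measurable_const)
    (fun x => ⟨le_min ENNReal.toReal_nonneg zero_le_one, min_le_right _ _⟩) hδ
  refine ⟨π, hπ, ?_⟩
  filter_upwards [hh, ae_forall_mem_measure_ne_zero π lam] with x hx hnull
  obtain ⟨A, hA, hxA⟩ := hπ.exists_mem x
  have hpos : 0 < lam.real A := ENNReal.toReal_pos (hnull A hA hxA) (measure_ne_top _ _)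
  have hint : ∫ y in A, h y ∂lam = ν.real A := by
    rw [integral_congr_ae (ae_restrict_of_ae hh)]
    exact Measure.setIntegral_toReal_rnDeriv (Measure.absolutelyContinuous_of_le hνlam) A
  have hdev : |ν.real A - lam.real A * h x| ≤ δ * lam.real A := by
    have := norm_setIntegral_le_of_norm_le_const (f := fun y => h y - h x) (measure_lt_top lam A)
      fun y hy => hosc A hA y hy x hxA
    rwa [integral_sub (Measure.integrable_toReal_rnDeriv.congr hh.symm).integrableOn
      (integrableOn_const (measure_ne_top _ _)), hint, setIntegral_const, smul_eq_mul,
      Real.norm_eq_abs] at this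
  rw [partFn_eq_of_mem hπ hA hxA, ← hx, div_sub' hpos.ne', abs_div, abs_of_pos hpos,
    div_le_iff₀ hpos]
  linarith

lemma exists_isFinitePartition_integral_exp_neg_lt [IsFiniteMeasure ν] (hνlam : ν ≤ lam)
    {ε : ℝ} (hε : 0 < ε) :
    ∃ π : Finset (Set Ω), IsFinitePartition π ∧
      ∫ x, Real.exp (-(ν.rnDeriv lam x).toReal) ∂lam
        < ∫ x, Real.exp (-partFn ν lam π x) ∂lam + ε := by
  set L := lam.real univ
  have hL : 0 ≤ L := measureReal_nonneg
  obtain ⟨π, hπ, hclose⟩ :=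
    exists_isFinitePartition_ae_abs_partFn_sub_le hνlam (div_pos hε (by linarith : 0 < L + 1))
  have hexp_g : Integrable (fun x => Real.exp (-(ν.rnDeriv lam x).toReal)) lam :=
    integrable_exp_neg_of_nonneg (ν.measurable_rnDeriv lam).ennreal_toReal
      fun _ => ENNReal.toReal_nonneg
  have hmono : ∫ x, (Real.exp (-(ν.rnDeriv lam x).toReal) - ε / (L + 1)) ∂lam
      ≤ ∫ x, Real.exp (-partFn ν lam π x) ∂lam := by
    refine integral_mono_ae (hexp_g.sub (integrable_const _))
      (integrable_exp_neg_of_nonneg (measurable_partFn hπ) partFn_nonneg) ?_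
    filter_upwards [hclose] with x hx
    linarith [Real.exp_neg_sub_abs_le (ENNReal.toReal_nonneg (a := ν.rnDeriv lam x))
      (partFn ν lam π x)]
  rw [integral_sub hexp_g (integrable_const _), integral_const, smul_eq_mul] at hmono
  refine ⟨π, hπ, ?_⟩
  have : L * (ε / (L + 1)) < ε := by
    rw [mul_div_assoc', div_lt_iff₀ (by linarith)]
    nlinarith
  linarith

lemma tendstoInMeasure_partFn_of_tendsto_integral_exp_neg [IsFiniteMeasure ν] (hνlam : ν ≤ lam)
    {π : ℕ → Finset (Set Ω)} (hπ : ∀ n, IsFinitePartition (π n))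
    (hlim : Tendsto (fun n => ∫ x, Real.exp (-partFn ν lam (π n) x) ∂lam) atTop
      (𝓝 (∫ x, Real.exp (-(ν.rnDeriv lam x).toReal) ∂lam))) :
    TendstoInMeasure lam (fun n => partFn ν lam (π n)) atTop
      fun x => (ν.rnDeriv lam x).toReal := by
  refine tendstoInMeasure_of_tendsto_integral_sq
    (fun n => integrable_sq_toReal_rnDeriv_sub_partFn hνlam (hπ n)) ?_
  have hgap := ((tendsto_const_nhds (x := ∫ x, Real.exp (-(ν.rnDeriv lam x).toReal) ∂lam)).sub
    hlim).div_const (Real.exp (-1) / 4)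
  rw [sub_self, zero_div] at hgap
  refine squeeze_zero (fun n => integral_nonneg fun _ => sq_nonneg _) (fun n => ?_) hgap
  rw [le_div_iff₀ (by positivity)]
  linarith [integral_exp_neg_partFn_add_sq_le hνlam (hπ n)]

end ExpFunctional

-- Also true for `a = 0`, where both sides are `0` because `x / 0 = 0`.
lemma div_eq_div_add_div_one_sub_div_add {a b : ℝ} (ha : 0 ≤ a) (hb : 0 ≤ b) :
    b / a = b / (a + b) / (1 - b / (a + b)) := by
  rcases ha.eq_or_lt with rfl | ha'
  · rcases hb.eq_or_lt with rfl | hb' <;> simp [*, ne_of_gt]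
  · rw [one_sub_div (by positivity), add_sub_cancel_right,
      div_div_div_cancel_right₀ (by positivity)]

section AddMeasure

variable {Ω : Type*} [MeasurableSpace Ω] {μ ν : Measure Ω} [IsFiniteMeasure μ]
  [IsFiniteMeasure ν]

lemma partFn_eq_partFn_add_div_one_sub {π : Finset (Set Ω)} (hπ : IsFinitePartition π) (x : Ω) :
    partFn ν μ π x = partFn ν (μ + ν) π x / (1 - partFn ν (μ + ν) π x) := by
  obtain ⟨A, hA, hx⟩ := hπ.exists_mem x
  rw [partFn_eq_of_mem hπ hA hx, partFn_eq_of_mem hπ hA hx, measureReal_add_apply]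
  exact div_eq_div_add_div_one_sub_div_add measureReal_nonneg measureReal_nonneg

lemma rnDeriv_add_rnDeriv_eq_one :
    ∀ᵐ x ∂(μ + ν), μ.rnDeriv (μ + ν) x + ν.rnDeriv (μ + ν) x = 1 := by
  filter_upwards [Measure.rnDeriv_add' μ ν (μ + ν), Measure.rnDeriv_self (μ + ν)] with x h1 h2
  rw [← Pi.add_apply, ← h1, h2]

lemma toReal_rnDeriv_add_eq_one_sub :
    ∀ᵐ x ∂(μ + ν), (μ.rnDeriv (μ + ν) x).toReal = 1 - (ν.rnDeriv (μ + ν) x).toReal := by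
  filter_upwards [rnDeriv_add_rnDeriv_eq_one] with x h
  have hμ : μ.rnDeriv (μ + ν) x ≠ ⊤ := fun h' => by simp [h'] at h
  have hν : ν.rnDeriv (μ + ν) x ≠ ⊤ := fun h' => by simp [h'] at h
  have := congrArg ENNReal.toReal h
  rw [ENNReal.toReal_add hμ hν, ENNReal.toReal_one] at this
  linarith

lemma toReal_rnDeriv_add_lt_one : ∀ᵐ x ∂μ, (ν.rnDeriv (μ + ν) x).toReal < 1 := by
  have hμ : μ ≪ μ + ν := Measure.absolutelyContinuous_of_le (Measure.le_add_right le_rfl)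
  filter_upwards [hμ toReal_rnDeriv_add_eq_one_sub, Measure.rnDeriv_pos hμ,
    hμ (Measure.rnDeriv_lt_top μ (μ + ν))] with x h hpos htop
  linarith [ENNReal.toReal_pos hpos.ne' htop.ne]

lemma toReal_rnDeriv_eq_div :
    ∀ᵐ x ∂μ, (ν.rnDeriv μ x).toReal
      = (ν.rnDeriv (μ + ν) x).toReal / (1 - (ν.rnDeriv (μ + ν) x).toReal) := by
  have hμ : μ ≪ μ + ν := Measure.absolutelyContinuous_of_le (Measure.le_add_right le_rfl)
  have hν : ν ≪ μ + ν := Measure.absolutelyContinuous_of_le (Measure.le_add_left le_rfl)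
  filter_upwards [Measure.rnDeriv_eq_div hν hμ, hμ toReal_rnDeriv_add_eq_one_sub] with x h1 h2
  rw [h1, ENNReal.toReal_div, h2]

lemma tendsto_integral_abs_partFn_sub_rnDeriv (hac : ν ≪ μ) {π : ℕ → Finset (Set Ω)}
    (hπ : ∀ n, IsFinitePartition (π n))
    (hconv : TendstoInMeasure (μ + ν) (fun n => partFn ν (μ + ν) (π n)) atTop
      fun x => (ν.rnDeriv (μ + ν) x).toReal) :
    Tendsto (fun n => ∫ x, |partFn ν μ (π n) x - (ν.rnDeriv μ x).toReal| ∂μ) atTop (𝓝 0) := by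
  have hμ : μ ≪ μ + ν := Measure.absolutelyContinuous_of_le (Measure.le_add_right le_rfl)
  refine tendsto_of_subseq_tendsto fun ns hns => ?_
  obtain ⟨ms, -, hae⟩ := (hconv.comp hns).exists_seq_tendsto_ae
  refine ⟨ms, tendsto_integral_abs_sub_of_tendsto_ae (fun _ => integrable_partFn (hπ _) μ)
    Measure.integrable_toReal_rnDeriv (fun _ => ae_of_all μ fun _ => partFn_nonneg _)
    (fun _ => by rw [integral_partFn hac (hπ _), Measure.integral_toReal_rnDeriv hac]) ?_⟩
  filter_upwards [hμ hae, toReal_rnDeriv_add_lt_one (ν := ν),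
    toReal_rnDeriv_eq_div (ν := ν)] with x hx hlt heq
  rw [heq]
  exact (hx.div (tendsto_const_nhds.sub hx) (sub_ne_zero.2 hlt.ne')).congr fun _ =>
    (partFn_eq_partFn_add_div_one_sub (hπ _) x).symm

end AddMeasure

/-- Let `μ, ν` be finite measures on `(Ω, F)` with `ν ≪ μ`, and `γ := μ + ν`. If `(π_n)_n` is an
increasing (refining) sequence of finite measurable partitions of `Ω` that asymptotically
maximizes `π ↦ ∫ e^{-f_π(γ)} dγ` over all finite measurable partitions, then
`f_{π_n}(μ) → dν/dμ` in `L¹(μ)`. -/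
theorem stmt5 {Ω : Type*} [MeasurableSpace Ω] (μ ν : Measure Ω)
    [IsFiniteMeasure μ] [IsFiniteMeasure ν] (hac : ν ≪ μ)
    (π : ℕ → Finset (Set Ω)) (hπ : ∀ n, IsFinitePartition (π n))
    (hmono : ∀ n, Refines (π (n + 1)) (π n))
    (hmax : (⨆ n, ∫ x, Real.exp (-(partFn ν (μ + ν) (π n) x)) ∂(μ + ν)) =
      ⨆ p : {p : Finset (Set Ω) // IsFinitePartition p},
        ∫ x, Real.exp (-(partFn ν (μ + ν) p.1 x)) ∂(μ + ν)) :
    Tendsto (fun n => ∫ x, |partFn ν μ (π n) x - (ν.rnDeriv μ x).toReal| ∂μ)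
      atTop (𝓝 0) := by
  have hνγ : ν ≤ μ + ν := Measure.le_add_left le_rfl
  set I : Finset (Set Ω) → ℝ := fun p => ∫ x, Real.exp (-partFn ν (μ + ν) p x) ∂(μ + ν)
  set M := ∫ x, Real.exp (-(ν.rnDeriv (μ + ν) x).toReal) ∂(μ + ν)
  have hIM {p : Finset (Set Ω)} (hp : IsFinitePartition p) : I p ≤ M :=
    integral_exp_neg_partFn_le hνγ hp
  have hsup : (⨆ n, I (π n)) = M := by
    refine le_antisymm (ciSup_le fun n => hIM (hπ n)) (le_of_forall_pos_lt_add fun ε hε => ?_)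
    obtain ⟨p, hp, hlt⟩ := exists_isFinitePartition_integral_exp_neg_lt hνγ hε
    have hbdd : BddAbove (range fun p : {p : Finset (Set Ω) // IsFinitePartition p} => I p) :=
      ⟨M, by rintro _ ⟨p, rfl⟩; exact hIM p.2⟩
    exact hlt.trans_le (add_le_add_left (hmax ▸ le_ciSup hbdd ⟨p, hp⟩) ε)
  have hlim : Tendsto (fun n => I (π n)) atTop (𝓝 M) := hsup ▸ tendsto_atTop_ciSup
    (monotone_nat_of_le_succ fun n => integral_exp_neg_partFn_le_of_refines
      (Measure.absolutelyContinuous_of_le hνγ) (hπ n) (hπ (n + 1)) (hmono n))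
    ⟨M, by rintro _ ⟨n, rfl⟩; exact hIM (hπ n)⟩
  exact tendsto_integral_abs_partFn_sub_rnDeriv hac hπ
    (tendstoInMeasure_partFn_of_tendsto_integral_exp_neg hνγ hπ hlim)
end

section
/- If ν ≪ μ, then the family (f_π(μ))_π, indexed by all finite measurable partitions π of Ω and given by f_π(μ) := Σ_{A ∈ π, μ(A) > 0} 1_A · ν(A)/μ(A), is uniformly integrable in L¹(μ): for every ε > 0 there exists k > 0 such that ∫_{{f_π(μ) ≥ k}} f_π(μ) dμ < ε for every finite measurable partition π. -/
/-!
On the superlevel set `S = {k ≤ f_π}`, a union of cells `A` with `ν A ≥ k μ A`, the function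
`f_π` integrates to `ν S`. Integrating the bound `k ≤ f_π` over `S` gives `k μ S ≤ ν S ≤ ν Ω`, so
`μ S → 0` uniformly in `π` as `k → ∞`, and the ε-δ form of `ν ≪ μ` makes `ν S < ε`.
-/

open MeasureTheory Filter Set
open scoped ENNReal Topology Classical

namespace MeasureTheory.Measure.AbsolutelyContinuous

variable {Ω : Type*} [MeasurableSpace Ω] {μ ν : Measure Ω}

theorem exists_pos_forall_measure_lt [IsFiniteMeasure ν] [SigmaFinite μ] (hac : ν ≪ μ)
    {ε : ℝ≥0∞} (hε : ε ≠ 0) : ∃ δ > 0, ∀ s, μ s < δ → ν s < ε := by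
  obtain ⟨δ, hδ, hlt⟩ :=
    exists_pos_setLIntegral_lt_of_measure_lt (Measure.lintegral_rnDeriv_lt_top ν μ).ne hε
  exact ⟨δ, hδ, fun s hs => Measure.setLIntegral_rnDeriv hac s ▸ hlt s hs⟩

theorem exists_pos_forall_measureReal_lt [IsFiniteMeasure ν] [IsFiniteMeasure μ] (hac : ν ≪ μ)
    {ε : ℝ} (hε : 0 < ε) : ∃ δ > 0, ∀ s, μ.real s < δ → ν.real s < ε := by
  obtain ⟨δ, hδ, hlt⟩ := hac.exists_pos_forall_measure_lt (ENNReal.ofReal_pos.2 hε).ne'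
  have hδ' : 0 < min δ 1 := lt_min hδ one_pos
  have hδ'_top : min δ 1 ≠ ∞ := (min_le_right δ 1).trans_lt ENNReal.one_lt_top |>.ne
  refine ⟨(min δ 1).toReal, ENNReal.toReal_pos hδ'.ne' hδ'_top, fun s hs => ?_⟩
  have hμs : μ s < min δ 1 := (ENNReal.toReal_lt_toReal (measure_ne_top μ s) hδ'_top).1 hs
  exact ENNReal.toReal_lt_of_lt_ofReal (hlt s (hμs.trans_le (min_le_left δ 1)))

end MeasureTheory.Measure.AbsolutelyContinuous

section partFn

variable {Ω : Type*} [MeasurableSpace Ω] {μ ν : Measure Ω} {π : Finset (Set Ω)}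

lemma partFn_eq_of_mem_s7 (hdisj : (π : Set (Set Ω)).PairwiseDisjoint id) {A : Set Ω} (hA : A ∈ π)
    {x : Ω} (hx : x ∈ A) :
    partFn ν μ π x = if μ A ≠ 0 then ν.real A / μ.real A else 0 := by
  rw [partFn, Finset.sum_eq_single_of_mem A hA]
  · by_cases h : μ A ≠ 0 <;> simp [h, hx, measureReal_def]
  · intro B hB hBA
    have hxB : x ∉ B := fun hxB => (hdisj hB hA hBA).le_bot ⟨hxB, hx⟩
    simp [hxB]

lemma integrable_partFn_s7 [IsFiniteMeasure μ] (hmeas : ∀ A ∈ π, MeasurableSet A) :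
    Integrable (partFn ν μ π) μ := by
  unfold partFn
  refine integrable_finsetSum π fun A hA => ?_
  have hcell : (fun x => if μ A ≠ 0 ∧ x ∈ A then (ν A).toReal / (μ A).toReal else 0) =
      A.indicator fun _ => if μ A ≠ 0 then (ν A).toReal / (μ A).toReal else 0 := by
    ext x
    by_cases hx : x ∈ A <;> simp [hx]
  rw [hcell]
  exact (integrable_const _).indicator (hmeas A hA)

lemma setIntegral_partFn_of_mem [IsFiniteMeasure μ] (hπ : IsFinitePartition π) {A : Set Ω}
    (hA : A ∈ π) (hμA : μ A ≠ 0) : ∫ x in A, partFn ν μ π x ∂μ = ν.real A := by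
  rw [setIntegral_congr_fun (hπ.1 A hA) fun x hx => partFn_eq_of_mem_s7 hπ.2.1 hA hx,
    if_pos hμA, setIntegral_const, smul_eq_mul,
    mul_div_cancel₀ _ ((measureReal_ne_zero_iff (measure_ne_top μ A)).2 hμA)]

noncomputable def partFnUpperCells (ν μ : Measure Ω) (π : Finset (Set Ω)) (k : ℝ) :
    Finset (Set Ω) :=
  π.filter fun A => μ A ≠ 0 ∧ k ≤ ν.real A / μ.real A

lemma setOf_le_partFn_eq_biUnion (hπ : IsFinitePartition π) {k : ℝ} (hk : 0 < k) :
    {x | k ≤ partFn ν μ π x} = ⋃ A ∈ partFnUpperCells ν μ π k, A := by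
  ext x
  have hx : x ∈ ⋃₀ (π : Set (Set Ω)) := hπ.2.2 ▸ mem_univ x
  obtain ⟨A, hA, hxA⟩ := hx
  simp only [mem_ofPred_eq, mem_iUnion, partFnUpperCells, Finset.mem_filter, exists_prop]
  constructor
  · intro hkx
    rw [partFn_eq_of_mem_s7 hπ.2.1 hA hxA] at hkx
    by_cases hμA : μ A ≠ 0
    · exact ⟨A, ⟨hA, hμA, by rwa [if_pos hμA] at hkx⟩, hxA⟩
    · rw [if_neg hμA] at hkx
      exact absurd hkx hk.not_ge
  · rintro ⟨B, ⟨hB, hμB, hkB⟩, hxB⟩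
    rwa [partFn_eq_of_mem_s7 hπ.2.1 hB hxB, if_pos hμB]

variable [IsFiniteMeasure μ] [IsFiniteMeasure ν]

lemma setIntegral_partFn_superlevel (hπ : IsFinitePartition π) {k : ℝ} (hk : 0 < k) :
    ∫ x in {x | k ≤ partFn ν μ π x}, partFn ν μ π x ∂μ = ν.real {x | k ≤ partFn ν μ π x} := by
  have hsub : ∀ A ∈ partFnUpperCells ν μ π k, A ∈ π := fun A hA => (Finset.mem_filter.1 hA).1
  have hmeas : ∀ A ∈ partFnUpperCells ν μ π k, MeasurableSet A := fun A hA => hπ.1 A (hsub A hA)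
  have hdisj : (partFnUpperCells ν μ π k : Set (Set Ω)).PairwiseDisjoint id :=
    hπ.2.1.subset fun A hA => hsub A hA
  rw [setOf_le_partFn_eq_biUnion hπ hk, integral_biUnion_finset _ hmeas hdisj
    fun A _ => (integrable_partFn_s7 hπ.1).integrableOn,
    measureReal_biUnion_finset (f := fun A => A) hdisj hmeas]
  exact Finset.sum_congr rfl fun A hA =>
    setIntegral_partFn_of_mem hπ (hsub A hA) (Finset.mem_filter.1 hA).2.1

lemma mul_measureReal_partFn_superlevel_le (hπ : IsFinitePartition π) {k : ℝ} (hk : 0 < k) :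
    k * μ.real {x | k ≤ partFn ν μ π x} ≤ ν.real univ := by
  have hS : MeasurableSet {x | k ≤ partFn ν μ π x} := by
    rw [setOf_le_partFn_eq_biUnion hπ hk]
    exact Finset.measurableSet_biUnion _ fun A hA => hπ.1 A (Finset.mem_filter.1 hA).1
  calc k * μ.real {x | k ≤ partFn ν μ π x}
      ≤ ∫ x in {x | k ≤ partFn ν μ π x}, partFn ν μ π x ∂μ :=
        setIntegral_ge_of_const_le_real hS (measure_ne_top μ _) (fun _ hx => hx)
          (integrable_partFn_s7 hπ.1).integrableOn
    _ = ν.real {x | k ≤ partFn ν μ π x} := setIntegral_partFn_superlevel hπ hk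
    _ ≤ ν.real univ := measureReal_mono (subset_univ _)

end partFn

/-- If `μ, ν` are finite measures with `ν ≪ μ`, then the family `(f_π(μ))_π`, indexed by all
finite measurable partitions `π` of `Ω`, is uniformly integrable: for every `ε > 0` there
is `k > 0` such that `∫_{f_π(μ) ≥ k} f_π(μ) dμ < ε` for every finite measurable
partition `π`. -/
theorem stmt7 {Ω : Type*} [MeasurableSpace Ω] (μ ν : Measure Ω)
    [IsFiniteMeasure μ] [IsFiniteMeasure ν] (hac : ν ≪ μ) :
    ∀ ε > (0 : ℝ), ∃ k > (0 : ℝ), ∀ π : Finset (Set Ω), IsFinitePartition π →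
      ∫ x in {y | k ≤ partFn ν μ π y}, partFn ν μ π x ∂μ < ε := by
  intro ε hε
  obtain ⟨δ, hδ, hνlt⟩ := hac.exists_pos_forall_measureReal_lt hε
  set k := ν.real univ / δ + 1
  have hk : 0 < k := by positivity
  refine ⟨k, hk, fun π hπ => ?_⟩
  rw [setIntegral_partFn_superlevel hπ hk]
  refine hνlt _ (lt_of_mul_lt_mul_left ?_ hk.le)
  calc k * μ.real {x | k ≤ partFn ν μ π x} ≤ ν.real univ :=
        mul_measureReal_partFn_superlevel_le hπ hk
    _ < k * δ := by rw [add_mul, div_mul_cancel₀ _ hδ.ne']; linarith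
end
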